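/- Let f : ℝ^d → ℝ be differentiable with ⟨∇f(x) − ∇f(y), x − y⟩ ≥ μ‖x − y‖² and ‖∇f(x) − ∇f(y)‖² ≤ l⟨∇f(x) − ∇f(y), x − y⟩ for all x, y (i.e., f is μ-strongly convex and l-smooth). Let α > 0 and θ ≥ 0 satisfy αl(1+2θ) < 1. Then for all x, y ∈ ℝ^d: ‖(x − y) − α(∇f(x) − ∇f(y))‖² + 2θα²‖∇f(x) − ∇f(y)‖² ≤ (1 − αμ(2 − αl(1+2θ)))‖x − y‖², and moreover 1 − αμ(2 − αl(1+2θ)) ≤ 1 − αμ(1 − αl(1+2θ)) < 1. -/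

import Mathlib

open Matrix Finset
open scoped Kronecker RealInnerProductSpace

noncomputable section

/-- Eigenvalues of a real symmetric matrix, sorted in ascending order. -/
def eigsAsc {n : ℕ} (A : Matrix (Fin n) (Fin n) ℝ) : Fin n → ℝ :=
  if h : A.IsHermitian then h.eigenvalues ∘ Tuple.sort h.eigenvalues else 0

/-- Singular values (ascending): square roots of eigenvalues of `BᵀB`. -/
def svals {m n : ℕ} (B : Matrix (Fin m) (Fin n) ℝ) : Fin n → ℝ :=
  fun i => Real.sqrt (eigsAsc (Bᵀ * B) i)

/-- The (unsorted) eigenvalues of a symmetric matrix. -/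
def eigsOf {ι : Type*} [Fintype ι] [DecidableEq ι] (A : Matrix ι ι ℝ) : ι → ℝ :=
  if h : A.IsHermitian then h.eigenvalues else 0

/-- Largest singular value. -/
def smax {κ ι : Type*} [Fintype κ] [Fintype ι] [DecidableEq ι] (B : Matrix κ ι ℝ) : ℝ :=
  ⨆ i, Real.sqrt (eigsOf (Bᵀ * B) i)

/-- Smallest nonzero singular value. -/
def sminPos {κ ι : Type*} [Fintype κ] [Fintype ι] [DecidableEq ι] (B : Matrix κ ι ℝ) : ℝ :=
  sInf {x : ℝ | 0 < x ∧ ∃ i, Real.sqrt (eigsOf (Bᵀ * B) i) = x}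

/-- Smallest eigenvalue of a symmetric matrix. -/
def lmin {ι : Type*} [Fintype ι] [DecidableEq ι] (A : Matrix ι ι ℝ) : ℝ :=
  if h : A.IsHermitian then ⨅ i, h.eigenvalues i else 0

def DoublyStochastic {n : ℕ} (M : Matrix (Fin n) (Fin n) ℝ) : Prop :=
  (∀ i j, 0 ≤ M i j) ∧ (∀ i, ∑ j, M i j = 1) ∧ (∀ j, ∑ i, M i j = 1)

/-- The null space of `B` is the span of the all-ones vector. -/
def NullSpanOnes {n : ℕ} (B : Matrix (Fin n) (Fin n) ℝ) : Prop :=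
  ∀ x : Fin n → ℝ, B.mulVec x = 0 ↔ ∃ c : ℝ, x = fun _ => c

/-- Horizontal concatenation `[A_1, …, A_n]`. -/
def hcat {n p : ℕ} {d : Fin n → ℕ} (A : ∀ i, Matrix (Fin p) (Fin (d i)) ℝ) :
    Matrix (Fin p) ((i : Fin n) × Fin (d i)) ℝ :=
  Matrix.of fun q jr => A jr.1 q jr.2

/-- Block diagonal matrix `diag(A_1, …, A_n)`. -/
def bdiag {n p : ℕ} {d : Fin n → ℕ} (A : ∀ i, Matrix (Fin p) (Fin (d i)) ℝ) :
    Matrix (Fin n × Fin p) ((i : Fin n) × Fin (d i)) ℝ :=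
  Matrix.of fun iq jr => if iq.1 = jr.1 then A jr.1 iq.2 jr.2 else 0

/-- Matrix–vector product, as a map of Euclidean spaces. -/
def mvec {κ ι : Type*} [Fintype ι] [Fintype κ] (M : Matrix κ ι ℝ)
    (x : EuclideanSpace ℝ ι) : EuclideanSpace ℝ κ := WithLp.toLp 2 (M.mulVec x)

/-- Weighted squared seminorm `‖z‖²_P = zᵀ P z`. -/
def wnormSq {ι : Type*} [Fintype ι] (P : Matrix ι ι ℝ) (z : EuclideanSpace ℝ ι) : ℝ :=
  ⟪z, mvec P z⟫

/-- `s` is a subgradient of `φ` at `x`. -/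
def IsSubgrad {ι : Type*} [Fintype ι] (φ : EuclideanSpace ℝ ι → EReal)
    (x s : EuclideanSpace ℝ ι) : Prop :=
  ∀ y, φ x + ((⟪s, y - x⟫ : ℝ) : EReal) ≤ φ y

/-- `p = prox_{βφ}(u)`. -/
def IsProx {ι : Type*} [Fintype ι] (φ : EuclideanSpace ℝ ι → EReal) (β : ℝ)
    (u p : EuclideanSpace ℝ ι) : Prop :=
  ∀ y, φ p + (((2*β)⁻¹ * ‖p - u‖^2 : ℝ) : EReal) ≤ φ y + (((2*β)⁻¹ * ‖y - u‖^2 : ℝ) : EReal)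

/-- Convex conjugate. -/
def econj {ι : Type*} [Fintype ι] (h : EuclideanSpace ℝ ι → EReal)
    (l : EuclideanSpace ℝ ι) : EReal :=
  ⨆ y, ((⟪l, y⟫ : ℝ) : EReal) - h y

/-- Proper, closed (lower semicontinuous) and convex extended-real-valued function. -/
def ProperClosedConvex {ι : Type*} [Fintype ι] (φ : EuclideanSpace ℝ ι → EReal) : Prop :=
  (∀ x, φ x ≠ ⊥) ∧ (∃ x, φ x ≠ ⊤) ∧ LowerSemicontinuous φ ∧
    ∀ x y : EuclideanSpace ℝ ι, ∀ a b : ℝ, 0 ≤ a → 0 ≤ b → a + b = 1 →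
      φ (a • x + b • y) ≤ (a : EReal) * φ x + (b : EReal) * φ y

/-- Replicate a vector `n` times: `1_n ⊗ λ`. -/
def repBlock {n p : ℕ} (lam : EuclideanSpace ℝ (Fin p)) :
    EuclideanSpace ℝ (Fin n × Fin p) := WithLp.toLp 2 (fun iq : Fin n × Fin p => lam iq.2)

/-- Extract the `i`-th block of a stacked vector. -/
def blk {n p : ℕ} (z : EuclideanSpace ℝ (Fin n × Fin p)) (i : Fin n) :
    EuclideanSpace ℝ (Fin p) := WithLp.toLp 2 (fun q : Fin p => z (i, q))

/-- `h̄(ℓ) = (1/n) Σᵢ h*(λᵢ)`. -/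
def hbar {n p : ℕ} (hs : EuclideanSpace ℝ (Fin p) → EReal)
    (z : EuclideanSpace ℝ (Fin n × Fin p)) : EReal :=
  (((n : ℝ)⁻¹ : ℝ) : EReal) * ∑ i : Fin n, hs (blk z i)


/-- Kronecker product with the `p × p` identity: `B ⊗ I_p`. -/
def KI {n : ℕ} (p : ℕ) (B : Matrix (Fin n) (Fin n) ℝ) :
    Matrix (Fin n × Fin p) (Fin n × Fin p) ℝ :=
  B ⊗ₖ (1 : Matrix (Fin p) (Fin p) ℝ)

theorem norm_sub_smul_sq {E : Type*} [NormedAddCommGroup E] [InnerProductSpace ℝ E]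
    (r g : E) (α : ℝ) : ‖r - α • g‖ ^ 2 = ‖r‖ ^ 2 - 2 * α * ⟪g, r⟫ + α ^ 2 * ‖g‖ ^ 2 := by
  rw [norm_sub_sq_real, real_inner_smul_right, norm_smul, mul_pow, Real.norm_eq_abs, sq_abs,
    real_inner_comm]
  ring

/- Co-coercivity turns the `‖g‖²` term into a multiple of `⟪g, r⟫`; its total coefficient
`-α(2 - αl(1+2θ))` is nonpositive, so strong monotonicity bounds it. -/
theorem norm_sub_smul_sq_add_le {E : Type*} [NormedAddCommGroup E] [InnerProductSpace ℝ E]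
    {r g : E} {μ l α θ : ℝ} (hsc : μ * ‖r‖ ^ 2 ≤ ⟪g, r⟫) (hsm : ‖g‖ ^ 2 ≤ l * ⟪g, r⟫)
    (hα : 0 ≤ α) (hθ : 0 ≤ θ) (hstep : α * l * (1 + 2 * θ) ≤ 2) :
    ‖r - α • g‖ ^ 2 + 2 * θ * α ^ 2 * ‖g‖ ^ 2 ≤
      (1 - α * μ * (2 - α * l * (1 + 2 * θ))) * ‖r‖ ^ 2 :=
  calc ‖r - α • g‖ ^ 2 + 2 * θ * α ^ 2 * ‖g‖ ^ 2
      = ‖r‖ ^ 2 - 2 * α * ⟪g, r⟫ + α ^ 2 * (1 + 2 * θ) * ‖g‖ ^ 2 := by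
        rw [norm_sub_smul_sq]; ring
    _ ≤ ‖r‖ ^ 2 - 2 * α * ⟪g, r⟫ + α ^ 2 * (1 + 2 * θ) * (l * ⟪g, r⟫) := by gcongr
    _ = ‖r‖ ^ 2 - α * (2 - α * l * (1 + 2 * θ)) * ⟪g, r⟫ := by ring
    _ ≤ ‖r‖ ^ 2 - α * (2 - α * l * (1 + 2 * θ)) * (μ * ‖r‖ ^ 2) := by
        have : 0 ≤ 2 - α * l * (1 + 2 * θ) := sub_nonneg.2 hstep
        gcongr
    _ = (1 - α * μ * (2 - α * l * (1 + 2 * θ))) * ‖r‖ ^ 2 := by ring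

theorem grad_step_contraction_general {d : ℕ} (μ l α θ : ℝ)
    (hμ : 0 < μ)
    (gf : EuclideanSpace ℝ (Fin d) → EuclideanSpace ℝ (Fin d))
    (hsc : ∀ x y, μ * ‖x - y‖ ^ 2 ≤ ⟪gf x - gf y, x - y⟫)
    (hsm : ∀ x y, ‖gf x - gf y‖ ^ 2 ≤ l * ⟪gf x - gf y, x - y⟫)
    (hα : 0 < α) (hθ : 0 ≤ θ) (hstep : α * l * (1 + 2 * θ) < 1) :
    (∀ x y : EuclideanSpace ℝ (Fin d),
      ‖(x - y) - α • (gf x - gf y)‖ ^ 2 + 2 * θ * α ^ 2 * ‖gf x - gf y‖ ^ 2 ≤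
        (1 - α * μ * (2 - α * l * (1 + 2 * θ))) * ‖x - y‖ ^ 2) ∧
      1 - α * μ * (2 - α * l * (1 + 2 * θ)) ≤ 1 - α * μ * (1 - α * l * (1 + 2 * θ)) ∧
      1 - α * μ * (1 - α * l * (1 + 2 * θ)) < 1 := by
  have hαμ : 0 < α * μ := mul_pos hα hμ
  refine ⟨fun x y => norm_sub_smul_sq_add_le (hsc x y) (hsm x y) hα.le hθ (by linarith), ?_, ?_⟩
  · exact sub_le_sub_left (mul_le_mul_of_nonneg_left (by linarith) hαμ.le) 1
  · exact sub_lt_self 1 (mul_pos hαμ (sub_pos.2 hstep))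

/-- Contraction estimate for the gradient step with momentum term. -/
theorem grad_step_contraction {d : ℕ} (μ l α θ : ℝ)
    (hμ : 0 < μ) (hl : 0 < l) (hμl : μ ≤ l)
    (f : EuclideanSpace ℝ (Fin d) → ℝ) (gf : EuclideanSpace ℝ (Fin d) → EuclideanSpace ℝ (Fin d))
    (hdiff : ∀ x, HasGradientAt f (gf x) x)
    (hsc : ∀ x y, μ * ‖x - y‖ ^ 2 ≤ ⟪gf x - gf y, x - y⟫)
    (hsm : ∀ x y, ‖gf x - gf y‖ ^ 2 ≤ l * ⟪gf x - gf y, x - y⟫)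
    (hα : 0 < α) (hθ : 0 ≤ θ) (hstep : α * l * (1 + 2 * θ) < 1) :
    (∀ x y : EuclideanSpace ℝ (Fin d),
      ‖(x - y) - α • (gf x - gf y)‖ ^ 2 + 2 * θ * α ^ 2 * ‖gf x - gf y‖ ^ 2 ≤
        (1 - α * μ * (2 - α * l * (1 + 2 * θ))) * ‖x - y‖ ^ 2) ∧
      1 - α * μ * (2 - α * l * (1 + 2 * θ)) ≤ 1 - α * μ * (1 - α * l * (1 + 2 * θ)) ∧
      1 - α * μ * (1 - α * l * (1 + 2 * θ)) < 1 :=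
  grad_step_contraction_general μ l α θ hμ gf hsc hsm hα hθ hstep

end
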